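/- For any two octonions a, b, the map D_{a,b}(x) = [[a,b], x] - 3[a,b,x] is a derivation of the octonions: D_{a,b}(xy) = D_{a,b}(x) y + x D_{a,b}(y) for all x, y. -/

import Mathlib

noncomputable section

/-- The octonions, constructed from the quaternions via the Cayley–Dickson doubling. -/
structure Octonion : Type where
  q1 : Quaternion ℝ
  q2 : Quaternion ℝ

namespace Octonion

instance : Zero Octonion := ⟨⟨0, 0⟩⟩
instance : One Octonion := ⟨⟨1, 0⟩⟩
instance : Add Octonion := ⟨fun x y => ⟨x.q1 + y.q1, x.q2 + y.q2⟩⟩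
instance : Neg Octonion := ⟨fun x => ⟨-x.q1, -x.q2⟩⟩
instance : Sub Octonion := ⟨fun x y => ⟨x.q1 - y.q1, x.q2 - y.q2⟩⟩

/-- Cayley–Dickson multiplication. -/
instance : Mul Octonion :=
  ⟨fun x y => ⟨x.q1 * y.q1 - star y.q2 * x.q2, y.q2 * x.q1 + x.q2 * star y.q1⟩⟩

instance : SMul ℝ Octonion := ⟨fun r x => ⟨r • x.q1, r • x.q2⟩⟩

/-- Octonionic conjugation. -/
def conj (x : Octonion) : Octonion := ⟨star x.q1, -x.q2⟩

/-- The real part of an octonion. -/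
def re (x : Octonion) : ℝ := x.q1.re

/-- The squared norm of an octonion. -/
def normSq (x : Octonion) : ℝ := Quaternion.normSq x.q1 + Quaternion.normSq x.q2

/-- The multiplicative inverse of a nonzero octonion. -/
instance : Inv Octonion := ⟨fun x => (normSq x)⁻¹ • conj x⟩

/-- The commutator of two octonions. -/
def comm (x y : Octonion) : Octonion := x * y - y * x

/-- The associator of three octonions. -/
def assoc (x y z : Octonion) : Octonion := (x * y) * z - x * (y * z)

/-- The derivation `D_{a,b}` of the octonions. -/
def D (a b x : Octonion) : Octonion := comm (comm a b) x - (3 : ℝ) • assoc a b x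

end Octonion

/-!
In an alternative ring the associator is alternating, and this is exactly what makes the left and
right multiplications `L_a`, `R_a` obey the principle of local triality: with `T_a = L_a + R_a`, the
triples `t_a = (T_a, L_a, R_a)`, `l_a = (L_a, T_a, -L_a)` and `r_a = (R_a, -R_a, T_a)` are related,
i.e. `f (x * y) = g x * y + x * h y`. Related triples are closed under componentwise commutators.
Since moreover `[L_a, R_b] = [R_a, L_b]`, all three components of `[t_a, t_b] - [l_a, r_b]` equal
`[L_a, L_b] + [L_a, R_b] + [R_a, R_b]`, which is therefore a derivation; evaluated at `x` it is
`[[a, b], x] - 3 [a, b, x]`. The octonions are alternative by a computation in coordinates.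
-/

class IsAlternative (A : Type*) [NonUnitalNonAssocRing A] : Prop where
  associator_self_left (x y : A) : associator x x y = 0
  associator_self_right (x y : A) : associator x y y = 0

section NonUnitalNonAssocRing

variable {A : Type*} [NonUnitalNonAssocRing A]

namespace IsAlternative

variable [IsAlternative A]

lemma associator_swap_left (x y z : A) : associator y x z = -associator x y z := by
  linear_combination (norm := (simp only [associator, add_mul, mul_add]; abel))
    associator_self_left (x + y) z - associator_self_left x z - associator_self_left y z

lemma associator_swap_right (x y z : A) : associator x z y = -associator x y z := by
  linear_combination (norm := (simp only [associator, add_mul, mul_add]; abel))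
    associator_self_right x (y + z) - associator_self_right x y - associator_self_right x z

lemma associator_rotate (x y z : A) : associator y z x = associator x y z := by
  rw [associator_swap_right, associator_swap_left, neg_neg]

lemma associator_reverse (x y z : A) : associator z y x = -associator x y z := by
  rw [associator_swap_left, associator_rotate]

end IsAlternative

def IsRelatedTriple (f g h : Module.End ℤ A) : Prop :=
  ∀ x y, f (x * y) = g x * y + x * h y

namespace IsRelatedTriple

variable {f g h f' g' h' : Module.End ℤ A}

lemma sub (H : IsRelatedTriple f g h) (H' : IsRelatedTriple f' g' h') :
    IsRelatedTriple (f - f') (g - g') (h - h') := by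
  intro x y
  simp only [LinearMap.sub_apply, H x y, H' x y, sub_mul, mul_sub]
  abel

lemma lie (H : IsRelatedTriple f g h) (H' : IsRelatedTriple f' g' h') :
    IsRelatedTriple ⁅f, f'⁆ ⁅g, g'⁆ ⁅h, h'⁆ := by
  intro x y
  simp only [Ring.lie_def, LinearMap.sub_apply, Module.End.mul_apply, H x y, H' x y, map_add,
    H (g' x) y, H x (h' y), H' (g x) y, H' x (h y), sub_mul, mul_sub]
  abel

end IsRelatedTriple

attribute [local instance] LieRing.ofAssociativeRing

local notation "L" => LinearMap.mulLeft ℤ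
local notation "R" => LinearMap.mulRight ℤ

def innerDerivation (a b : A) : Module.End ℤ A :=
  ⁅L a, L b⁆ + ⁅L a, R b⁆ + ⁅R a, R b⁆

variable [IsAlternative A]

open IsAlternative

lemma isRelatedTriple_mulLeft_add_mulRight (a : A) :
    IsRelatedTriple (L a + R a) (L a) (R a) := by
  intro x y
  linear_combination (norm := (simp only [associator, LinearMap.add_apply,
      LinearMap.mulLeft_apply, LinearMap.mulRight_apply]; abel))
    associator_rotate a x y

lemma isRelatedTriple_mulLeft (a : A) :
    IsRelatedTriple (L a) (L a + R a) (-L a) := by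
  intro x y
  linear_combination (norm := (simp only [associator, LinearMap.add_apply, LinearMap.neg_apply,
      LinearMap.mulLeft_apply, LinearMap.mulRight_apply, add_mul, mul_neg]; abel))
    -associator_swap_left x a y

lemma isRelatedTriple_mulRight (a : A) :
    IsRelatedTriple (R a) (-R a) (L a + R a) := by
  intro x y
  linear_combination (norm := (simp only [associator, LinearMap.add_apply, LinearMap.neg_apply,
      LinearMap.mulLeft_apply, LinearMap.mulRight_apply, mul_add, neg_mul]; abel))
    associator_swap_right x y a

lemma lie_mulLeft_mulRight_eq_lie_mulRight_mulLeft (a b : A) : ⁅L a, R b⁆ = ⁅R a, L b⁆ := by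
  ext x
  linear_combination (norm := (simp only [associator, Ring.lie_def, LinearMap.sub_apply,
      Module.End.mul_apply, LinearMap.mulLeft_apply, LinearMap.mulRight_apply]; abel))
    -associator_reverse a x b

lemma isRelatedTriple_innerDerivation (a b : A) :
    IsRelatedTriple (innerDerivation a b) (innerDerivation a b) (innerDerivation a b) := by
  have H := ((isRelatedTriple_mulLeft_add_mulRight a).lie
    (isRelatedTriple_mulLeft_add_mulRight b)).sub
    ((isRelatedTriple_mulLeft a).lie (isRelatedTriple_mulRight b))
  convert H using 1 <;>
    simp only [innerDerivation, add_lie, lie_add, neg_lie, lie_neg,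
      lie_mulLeft_mulRight_eq_lie_mulRight_mulLeft] <;>
    abel

lemma innerDerivation_apply (a b x : A) :
    innerDerivation a b x = ⁅⁅a, b⁆, x⁆ - 3 • associator a b x := by
  linear_combination (norm := (simp only [innerDerivation, associator, Ring.lie_def,
      LinearMap.add_apply, LinearMap.sub_apply, Module.End.mul_apply, LinearMap.mulLeft_apply,
      LinearMap.mulRight_apply, mul_sub, sub_mul]; abel))
    associator_swap_left a b x - associator_swap_right a b x + associator_reverse a b x +
      associator_rotate x a b

end NonUnitalNonAssocRing

namespace Octonion

@[ext]
lemma ext {x y : Octonion} (h1 : x.q1 = y.q1) (h2 : x.q2 = y.q2) : x = y := by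
  cases x; cases y; congr

@[simp] lemma q1_zero : (0 : Octonion).q1 = 0 := rfl
@[simp] lemma q2_zero : (0 : Octonion).q2 = 0 := rfl
@[simp] lemma q1_add (x y : Octonion) : (x + y).q1 = x.q1 + y.q1 := rfl
@[simp] lemma q2_add (x y : Octonion) : (x + y).q2 = x.q2 + y.q2 := rfl
@[simp] lemma q1_sub (x y : Octonion) : (x - y).q1 = x.q1 - y.q1 := rfl
@[simp] lemma q2_sub (x y : Octonion) : (x - y).q2 = x.q2 - y.q2 := rfl
@[simp] lemma q1_mul (x y : Octonion) : (x * y).q1 = x.q1 * y.q1 - star y.q2 * x.q2 := rfl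
@[simp] lemma q2_mul (x y : Octonion) : (x * y).q2 = y.q2 * x.q1 + x.q2 * star y.q1 := rfl

instance : SMul ℕ Octonion := ⟨fun n x => ⟨n • x.q1, n • x.q2⟩⟩
instance : SMul ℤ Octonion := ⟨fun n x => ⟨n • x.q1, n • x.q2⟩⟩

instance : AddCommGroup Octonion :=
  Function.Injective.addCommGroup (fun x => (x.q1, x.q2))
    (fun _ _ h => ext (congrArg Prod.fst h) (congrArg Prod.snd h))
    rfl (fun _ _ => rfl) (fun _ => rfl) (fun _ _ => rfl) (fun _ _ => rfl) (fun _ _ => rfl)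

instance : NonUnitalNonAssocRing Octonion where
  left_distrib x y z := by
    apply ext <;> simp only [q1_mul, q2_mul, q1_add, q2_add, star_add, mul_add, add_mul] <;> abel
  right_distrib x y z := by
    apply ext <;> simp only [q1_mul, q2_mul, q1_add, q2_add, mul_add, add_mul] <;> abel
  zero_mul x := by ext <;> simp
  mul_zero x := by ext <;> simp

open Quaternion in
instance : IsAlternative Octonion := by
  constructor <;> intro x y <;> ext <;>
    simp only [associator, q1_sub, q2_sub, q1_mul, q2_mul, q1_zero, q2_zero, re_zero, imI_zero,
      imJ_zero, imK_zero, re_sub, imI_sub, imJ_sub, imK_sub, re_add, imI_add, imJ_add, imK_add,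
      re_mul, imI_mul, imJ_mul, imK_mul, re_star, imI_star, imJ_star, imK_star] <;>
    ring

lemma D_eq_innerDerivation (a b x : Octonion) : D a b x = innerDerivation a b x := by
  have hsmul : (3 : ℝ) • associator a b x = 3 • associator a b x := by
    ext <;> exact ofNat_smul_eq_nsmul ℝ 3 _
  rw [innerDerivation_apply, D, ← hsmul]
  rfl

end Octonion

open Octonion

theorem D_is_derivation (a b x y : Octonion) :
    D a b (x * y) = D a b x * y + x * D a b y := by
  simp only [D_eq_innerDerivation]
  exact isRelatedTriple_innerDerivation a b x y
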